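/- arXiv:1303.6815 — 3 statements merged into one kernel-verified Lean document; each statement's English description precedes it below -/
import Mathlib

section
/- Let P be a δε-chain and R_P the associated bubble-sort chain of adjacent-swap reflections reversing P, acting on h* where odd swaps act by the odd-reflection rule on weights (r_α(λ) = λ if ⟨λ,α⟩ = 0, λ − α otherwise) and even swaps act by the usual linear reflection. Let R_P′ be the operator obtained from R_P by dropping all odd reflections. Then R_P = R_P′ as operators on h* if and only if the type-string of P (the word in {δ, ε} obtained by forgetting indices) is a palindrome. -/
noncomputable section

/-- The weight `δ_i` (for `Sum.inl i`) resp. `ε_j` (for `Sum.inr j`) of `gl(m|n)`. -/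
def wtS (m n : ℕ) (a : Fin m ⊕ Fin n) : (Fin m ⊕ Fin n) → ℝ := Pi.single a 1

/-- The invariant form of signature `(m, n)`. -/
def wformS (m n : ℕ) (v w : (Fin m ⊕ Fin n) → ℝ) : ℝ :=
  (∑ i : Fin m, v (Sum.inl i) * w (Sum.inl i)) -
    ∑ j : Fin n, v (Sum.inr j) * w (Sum.inr j)

/-- Even reflection at an anisotropic root. -/
def evenReflS (m n : ℕ) (α μ : (Fin m ⊕ Fin n) → ℝ) : (Fin m ⊕ Fin n) → ℝ :=
  μ - (2 * wformS m n α μ / wformS m n α α) • α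

/-- Odd reflection on weights: `r_α(λ) = λ` if `⟨λ,α⟩ = 0`, `λ − α` otherwise. -/
def oddReflS (m n : ℕ) (α μ : (Fin m ⊕ Fin n) → ℝ) : (Fin m ⊕ Fin n) → ℝ :=
  if wformS m n α μ = 0 then μ else μ - α

/-- The reflection attached to a swap of the symbols `a`, `b`: even (linear) if they
are of the same type, odd otherwise. -/
def swapReflS (m n : ℕ) (a b : Fin m ⊕ Fin n) (μ : (Fin m ⊕ Fin n) → ℝ) :
    (Fin m ⊕ Fin n) → ℝ :=
  if a.isLeft = b.isLeft then evenReflS m n (wtS m n a - wtS m n b) μ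
  else oddReflS m n (wtS m n a - wtS m n b) μ

/-- The bubble-sort pattern of adjacent transpositions reversing positions `l,…,r`. -/
def bubblePat (l r : ℕ) (b : Bool) : List (ℕ × ℕ) :=
  if _h : l < r then
    if b then ((List.range (r - l)).map fun k => (l, l + k + 1)) ++ bubblePat (l + 1) r false
    else ((List.range (r - l)).map fun k => (r - 1 - k, r)) ++ bubblePat l (r - 1) true
  else []
termination_by r - l
decreasing_by all_goals omega

/-- The operator `R_P` on `h*`: the bubble-sort chain of reflections reversing the
δε-chain `C`, applied in order, with odd swaps acting by the odd-reflection rule. -/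
def RPchain (m n : ℕ) (C : ℕ → Fin m ⊕ Fin n) (μ : (Fin m ⊕ Fin n) → ℝ) :
    (Fin m ⊕ Fin n) → ℝ :=
  (bubblePat 0 (m + n - 1) true).foldl (fun ν p => swapReflS m n (C p.1) (C p.2) ν) μ

/-- The operator `R_P'`: the same chain with all odd reflections dropped. -/
def RPchainEven (m n : ℕ) (C : ℕ → Fin m ⊕ Fin n) (μ : (Fin m ⊕ Fin n) → ℝ) :
    (Fin m ⊕ Fin n) → ℝ :=
  (bubblePat 0 (m + n - 1) true).foldl
    (fun ν p =>
      if (C p.1).isLeft = (C p.2).isLeft then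
        evenReflS m n (wtS m n (C p.1) - wtS m n (C p.2)) ν
      else ν)
    μ

/-!
The even reflection at `δ_a - δ_b` (or `ε_a - ε_b`) is the transposition of the coordinates `a`
and `b`, so `R_P'` always acts by a permutation of coordinates. The bubble-sort chain is a
sequence of nested layers, the layer of positions `l < r` being the hook
`(l, l+1), …, (l, r), (r-1, r), …, (l+1, r)`. If the symbols at `l` and `r` have the same type,
both `R_P` and `R_P'` act on this layer as their transposition: the two odd reflections against a
symbol `c` of the other type either both fire or both do not, and then cancel. So a palindromic
type-string gives `R_P = R_P'` layer by layer. Otherwise, conjugating through the matched outer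
layers, it suffices to look at the outermost mismatched layer `l, r`: there `R_P` sends the
weight `2 e_{C l}` to a weight with coordinate `1` at `C r`, which is not a coordinate
permutation of `2 e_{C l}`.
-/

namespace RPchain

variable {m n : ℕ}

lemma wformS_sub_left (u v w : (Fin m ⊕ Fin n) → ℝ) :
    wformS m n (u - v) w = wformS m n u w - wformS m n v w := by
  simp only [wformS, Pi.sub_apply, sub_mul, Finset.sum_sub_distrib]
  ring

lemma wformS_wtS_left (a : Fin m ⊕ Fin n) (w : (Fin m ⊕ Fin n) → ℝ) :
    wformS m n (wtS m n a) w = if a.isLeft then w a else -w a := by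
  cases a <;> simp [wformS, wtS, Pi.single_apply]

lemma evenReflS_wtS_sub {a b : Fin m ⊕ Fin n} (ht : a.isLeft = b.isLeft)
    (μ : (Fin m ⊕ Fin n) → ℝ) :
    evenReflS m n (wtS m n a - wtS m n b) μ = μ ∘ Equiv.swap a b := by
  by_cases hab : a = b
  · subst hab
    simp [evenReflS]
  have hcoef : 2 * wformS m n (wtS m n a - wtS m n b) μ /
      wformS m n (wtS m n a - wtS m n b) (wtS m n a - wtS m n b) = μ a - μ b := by
    simp only [wformS_sub_left, wformS_wtS_left, ← ht]
    simp only [wtS, Pi.sub_apply, Pi.single_eq_same, Pi.single_eq_of_ne hab,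
      Pi.single_eq_of_ne (Ne.symm hab)]
    split_ifs <;> field_simp <;> ring
  rw [evenReflS, hcoef]
  funext x
  simp only [Pi.sub_apply, Pi.smul_apply, smul_eq_mul, wtS,
    Function.comp_apply, Equiv.swap_apply_def, Pi.single_apply]
  split_ifs <;> simp_all

lemma swapReflS_of_isLeft_eq {a b : Fin m ⊕ Fin n} (ht : a.isLeft = b.isLeft)
    (μ : (Fin m ⊕ Fin n) → ℝ) : swapReflS m n a b μ = μ ∘ Equiv.swap a b := by
  rw [swapReflS, if_pos ht, evenReflS_wtS_sub ht]

lemma swapReflS_of_isLeft_ne {a b : Fin m ⊕ Fin n} (ht : a.isLeft ≠ b.isLeft)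
    (μ : (Fin m ⊕ Fin n) → ℝ) : swapReflS m n a b μ =
      if μ a + μ b = 0 then μ else μ - (wtS m n a - wtS m n b) := by
  have hform : wformS m n (wtS m n a - wtS m n b) μ = 0 ↔ μ a + μ b = 0 := by
    rw [wformS_sub_left, wformS_wtS_left, wformS_wtS_left]
    cases ha : a.isLeft <;> cases hb : b.isLeft <;> grind
  rw [swapReflS, if_neg ht, oddReflS]
  exact if_congr hform rfl rfl

lemma swapReflS_apply_of_ne {a b x : Fin m ⊕ Fin n} (hxa : x ≠ a) (hxb : x ≠ b)
    (μ : (Fin m ⊕ Fin n) → ℝ) : swapReflS m n a b μ x = μ x := by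
  by_cases ht : a.isLeft = b.isLeft
  · rw [swapReflS_of_isLeft_eq ht, Function.comp_apply, Equiv.swap_apply_of_ne_of_ne hxa hxb]
  · rw [swapReflS_of_isLeft_ne ht]
    split_ifs
    · rfl
    · simp [wtS, hxa, hxb]

lemma swapReflS_eq_self {a b : Fin m ⊕ Fin n} {μ : (Fin m ⊕ Fin n) → ℝ} (ha : μ a = 0)
    (hb : μ b = 0) : swapReflS m n a b μ = μ := by
  by_cases ht : a.isLeft = b.isLeft
  · rw [swapReflS_of_isLeft_eq ht]
    funext x
    simp only [Function.comp_apply, Equiv.swap_apply_def]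
    split_ifs <;> simp_all
  · rw [swapReflS_of_isLeft_ne ht, if_pos (by rw [ha, hb, add_zero])]

def evenSwapReflS (m n : ℕ) (a b : Fin m ⊕ Fin n) (μ : (Fin m ⊕ Fin n) → ℝ) :
    (Fin m ⊕ Fin n) → ℝ :=
  if a.isLeft = b.isLeft then evenReflS m n (wtS m n a - wtS m n b) μ else μ

lemma evenSwapReflS_of_isLeft_eq {a b : Fin m ⊕ Fin n} (ht : a.isLeft = b.isLeft)
    (μ : (Fin m ⊕ Fin n) → ℝ) : evenSwapReflS m n a b μ = μ ∘ Equiv.swap a b := by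
  rw [evenSwapReflS, if_pos ht, evenReflS_wtS_sub ht]

lemma evenSwapReflS_of_isLeft_ne {a b : Fin m ⊕ Fin n} (ht : a.isLeft ≠ b.isLeft)
    (μ : (Fin m ⊕ Fin n) → ℝ) : evenSwapReflS m n a b μ = μ :=
  if_neg ht

def chainRefl (m n : ℕ) (L : List ((Fin m ⊕ Fin n) × (Fin m ⊕ Fin n)))
    (μ : (Fin m ⊕ Fin n) → ℝ) : (Fin m ⊕ Fin n) → ℝ :=
  L.foldl (fun ν p => swapReflS m n p.1 p.2 ν) μ

def chainReflEven (m n : ℕ) (L : List ((Fin m ⊕ Fin n) × (Fin m ⊕ Fin n)))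
    (μ : (Fin m ⊕ Fin n) → ℝ) : (Fin m ⊕ Fin n) → ℝ :=
  L.foldl (fun ν p => evenSwapReflS m n p.1 p.2 ν) μ

@[simp]
lemma chainRefl_nil (μ : (Fin m ⊕ Fin n) → ℝ) : chainRefl m n [] μ = μ := rfl

@[simp]
lemma chainRefl_cons (p : (Fin m ⊕ Fin n) × (Fin m ⊕ Fin n))
    (L : List ((Fin m ⊕ Fin n) × (Fin m ⊕ Fin n))) (μ : (Fin m ⊕ Fin n) → ℝ) :
    chainRefl m n (p :: L) μ = chainRefl m n L (swapReflS m n p.1 p.2 μ) := rfl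

@[simp]
lemma chainRefl_append (L₁ L₂ : List ((Fin m ⊕ Fin n) × (Fin m ⊕ Fin n)))
    (μ : (Fin m ⊕ Fin n) → ℝ) :
    chainRefl m n (L₁ ++ L₂) μ = chainRefl m n L₂ (chainRefl m n L₁ μ) :=
  List.foldl_append

@[simp]
lemma chainReflEven_nil (μ : (Fin m ⊕ Fin n) → ℝ) : chainReflEven m n [] μ = μ := rfl

@[simp]
lemma chainReflEven_cons (p : (Fin m ⊕ Fin n) × (Fin m ⊕ Fin n))
    (L : List ((Fin m ⊕ Fin n) × (Fin m ⊕ Fin n)))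
    (μ : (Fin m ⊕ Fin n) → ℝ) :
    chainReflEven m n (p :: L) μ = chainReflEven m n L (evenSwapReflS m n p.1 p.2 μ) := rfl

@[simp]
lemma chainReflEven_append (L₁ L₂ : List ((Fin m ⊕ Fin n) × (Fin m ⊕ Fin n)))
    (μ : (Fin m ⊕ Fin n) → ℝ) :
    chainReflEven m n (L₁ ++ L₂) μ = chainReflEven m n L₂ (chainReflEven m n L₁ μ) :=
  List.foldl_append

lemma chainRefl_apply_of_forall_ne {L : List ((Fin m ⊕ Fin n) × (Fin m ⊕ Fin n))}
    {x : Fin m ⊕ Fin n} (hx : ∀ p ∈ L, x ≠ p.1 ∧ x ≠ p.2) (μ : (Fin m ⊕ Fin n) → ℝ) :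
    chainRefl m n L μ x = μ x := by
  induction L generalizing μ with
  | nil => rfl
  | cons p L ih =>
    obtain ⟨hx1, hx2⟩ := hx p List.mem_cons_self
    rw [chainRefl_cons, ih (fun q hq => hx q (List.mem_cons_of_mem p hq)),
      swapReflS_apply_of_ne hx1 hx2]

lemma chainRefl_eq_self {L : List ((Fin m ⊕ Fin n) × (Fin m ⊕ Fin n))}
    {μ : (Fin m ⊕ Fin n) → ℝ} (hμ : ∀ p ∈ L, μ p.1 = 0 ∧ μ p.2 = 0) :
    chainRefl m n L μ = μ := by
  induction L with
  | nil => rfl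
  | cons p L ih =>
    obtain ⟨h1, h2⟩ := hμ p List.mem_cons_self
    rw [chainRefl_cons, swapReflS_eq_self h1 h2, ih (fun q hq => hμ q (List.mem_cons_of_mem p hq))]

lemma exists_chainReflEven_eq_comp (L : List ((Fin m ⊕ Fin n) × (Fin m ⊕ Fin n)))
    (μ : (Fin m ⊕ Fin n) → ℝ) :
    ∃ σ : Equiv.Perm (Fin m ⊕ Fin n), chainReflEven m n L μ = μ ∘ σ := by
  induction L generalizing μ with
  | nil => exact ⟨1, rfl⟩
  | cons p L ih =>
    by_cases ht : p.1.isLeft = p.2.isLeft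
    · obtain ⟨σ, hσ⟩ := ih (μ ∘ Equiv.swap p.1 p.2)
      refine ⟨Equiv.swap p.1 p.2 * σ, ?_⟩
      rw [chainReflEven_cons, evenSwapReflS_of_isLeft_eq ht, hσ]
      rfl
    · rw [chainReflEven_cons, evenSwapReflS_of_isLeft_ne ht]
      exact ih μ


def hook {α : Type*} (a r : α) (S : List α) : List (α × α) :=
  S.map (a, ·) ++ (a, r) :: S.reverse.map (·, r)

section hook

variable {α β : Type*}

@[simp]
lemma hook_nil (a r : α) : hook a r [] = [(a, r)] := rfl

lemma hook_cons (a r c : α) (S : List α) :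
    hook a r (c :: S) = (a, c) :: (hook a r S ++ [(c, r)]) := by
  simp [hook]

lemma hook_map (f : α → β) (a r : α) (S : List α) :
    (hook a r S).map (Prod.map f f) = hook (f a) (f r) (S.map f) := by
  simp [hook, List.map_reverse, Function.comp_def]

lemma mem_hook {a r : α} {S : List α} {p : α × α} (hp : p ∈ hook a r S) :
    (p.1 = a ∨ p.1 ∈ S) ∧ (p.2 = r ∨ p.2 ∈ S) := by
  simp only [hook, List.mem_append, List.mem_cons, List.mem_map, List.mem_reverse] at hp
  rcases hp with ⟨i, hi, rfl⟩ | rfl | ⟨i, hi, rfl⟩ <;> simp_all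

end hook

lemma bubblePat_true_of_lt {l r : ℕ} (h : l < r) :
    bubblePat l r true =
      hook l r (List.range' (l + 1) (r - 1 - l)) ++ bubblePat (l + 1) (r - 1) true := by
  have hA : (List.range (r - l)).map (fun k => (l, l + k + 1)) =
      (List.range' (l + 1) (r - 1 - l)).map (l, ·) ++ [(l, r)] := by
    rw [show r - l = r - 1 - l + 1 by omega, List.range_succ, List.map_append,
      List.range'_eq_map_range, List.map_map]
    congr 1
    · exact List.map_congr_left fun k _ => by simp only [Function.comp_apply]; congr 1; omega
    · simp only [List.map_cons, List.map_nil]; congr 2; omega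
  have hB : (List.range (r - (l + 1))).map (fun k => (r - 1 - k, r)) =
      (List.range' (l + 1) (r - 1 - l)).reverse.map (·, r) := by
    rw [List.reverse_range', List.map_map, show r - (l + 1) = r - 1 - l by omega]
    exact List.map_congr_left fun k _ => by simp only [Function.comp_apply]; congr 1; omega
  have hrow : bubblePat (l + 1) r false =
      (List.range' (l + 1) (r - 1 - l)).reverse.map (·, r) ++ bubblePat (l + 1) (r - 1) true := by
    by_cases h' : l + 1 < r
    · rw [bubblePat, dif_pos h', if_neg Bool.false_ne_true, hB]
    · rw [show r - 1 - l = 0 by omega, bubblePat, dif_neg h', bubblePat,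
        dif_neg (by omega)]
      rfl
  rw [bubblePat, dif_pos h, if_pos rfl, hA, hrow, hook]
  simp

lemma mem_bubblePat {l r : ℕ} {b : Bool} {p : ℕ × ℕ} (hp : p ∈ bubblePat l r b) :
    p.1 ∈ Set.Icc l r ∧ p.2 ∈ Set.Icc l r := by
  induction l, r, b using bubblePat.induct with
  | case1 l r h ih =>
    rw [bubblePat, dif_pos h, if_pos rfl, List.mem_append, List.mem_map] at hp
    rcases hp with ⟨k, hk, rfl⟩ | hp
    · simp only [List.mem_range, Set.mem_Icc] at hk ⊢; omega
    · have := ih hp; simp only [Set.mem_Icc] at this ⊢; omega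
  | case2 l r b h hb ih =>
    rw [bubblePat, dif_pos h, if_neg hb, List.mem_append, List.mem_map] at hp
    rcases hp with ⟨k, hk, rfl⟩ | hp
    · simp only [List.mem_range, Set.mem_Icc] at hk ⊢; omega
    · have := ih hp; simp only [Set.mem_Icc] at this ⊢; omega
  | case3 l r b h => simp [bubblePat, h] at hp


lemma chainRefl_hook {a r : Fin m ⊕ Fin n} {S : List (Fin m ⊕ Fin n)}
    (ht : a.isLeft = r.isLeft) (hS : ∀ c ∈ S, c ≠ a ∧ c ≠ r) (μ : (Fin m ⊕ Fin n) → ℝ) :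
    chainRefl m n (hook a r S) μ = μ ∘ Equiv.swap a r := by
  induction S generalizing μ with
  | nil => simp [swapReflS_of_isLeft_eq ht]
  | cons c S ih =>
    obtain ⟨hca, hcr⟩ := hS c List.mem_cons_self
    rw [hook_cons, chainRefl_cons, chainRefl_append,
      ih (fun c hc => hS c (List.mem_cons_of_mem _ hc)), chainRefl_cons, chainRefl_nil]
    by_cases hc : a.isLeft = c.isLeft
    · rw [swapReflS_of_isLeft_eq hc, swapReflS_of_isLeft_eq (hc.symm.trans ht)]
      funext x
      simp only [Function.comp_apply, Equiv.swap_apply_def]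
      split_ifs <;> simp_all
    · have hcr' : c.isLeft ≠ r.isLeft := fun h => hc (ht.trans h.symm)
      rw [swapReflS_of_isLeft_ne hc, swapReflS_of_isLeft_ne hcr']
      have hswap_c : Equiv.swap a r c = c := Equiv.swap_apply_of_ne_of_ne hca hcr
      by_cases h0 : μ a + μ c = 0
      · rw [if_pos h0, if_pos (by simpa [hswap_c, add_comm] using h0)]
      · rw [if_neg h0, if_neg (by simpa [hswap_c, wtS, hca, hcr, Ne.symm hca, add_comm] using h0)]
        funext x
        simp only [Pi.sub_apply, Function.comp_apply, wtS, Pi.single_apply, Equiv.swap_apply_def]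
        split_ifs <;> simp_all

lemma chainReflEven_hook {a r : Fin m ⊕ Fin n} {S : List (Fin m ⊕ Fin n)}
    (ht : a.isLeft = r.isLeft) (hS : ∀ c ∈ S, c ≠ a ∧ c ≠ r) (μ : (Fin m ⊕ Fin n) → ℝ) :
    chainReflEven m n (hook a r S) μ = μ ∘ Equiv.swap a r := by
  induction S generalizing μ with
  | nil => simp [evenSwapReflS_of_isLeft_eq ht]
  | cons c S ih =>
    obtain ⟨hca, hcr⟩ := hS c List.mem_cons_self
    rw [hook_cons, chainReflEven_cons, chainReflEven_append,
      ih (fun c hc => hS c (List.mem_cons_of_mem _ hc)), chainReflEven_cons, chainReflEven_nil]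
    by_cases hc : a.isLeft = c.isLeft
    · rw [evenSwapReflS_of_isLeft_eq hc, evenSwapReflS_of_isLeft_eq (hc.symm.trans ht)]
      funext x
      simp only [Function.comp_apply, Equiv.swap_apply_def]
      split_ifs <;> simp_all
    · rw [evenSwapReflS_of_isLeft_ne hc,
        evenSwapReflS_of_isLeft_ne fun h => hc (ht.trans h.symm)]

lemma chainRefl_hook_single_apply {a r : Fin m ⊕ Fin n} {S : List (Fin m ⊕ Fin n)}
    (ht : a.isLeft ≠ r.isLeft) (hS : ∀ c ∈ S, c ≠ a ∧ c ≠ r) (hnd : S.Nodup) :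
    chainRefl m n (hook a r S) (Pi.single a 2) r = 1 := by
  have har : a ≠ r := fun h => ht (h ▸ rfl)
  cases S with
  | nil =>
    rw [hook_nil, chainRefl_cons, chainRefl_nil, swapReflS_of_isLeft_ne ht,
      if_neg (by simp [Ne.symm har])]
    simp [wtS, Ne.symm har]
  | cons c S =>
    obtain ⟨hca, hcr⟩ := hS c List.mem_cons_self
    rw [hook_cons, chainRefl_cons, chainRefl_append, chainRefl_cons, chainRefl_nil]
    by_cases hc : a.isLeft = c.isLeft
    · have hsingle : Pi.single a (2 : ℝ) ∘ Equiv.swap a c = Pi.single c 2 := by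
        rw [Pi.single_comp_equiv, Equiv.symm_swap, Equiv.swap_apply_left]
      have hfix : chainRefl m n (hook a r S) (Pi.single c 2) = Pi.single c 2 := by
        refine chainRefl_eq_self fun p hp => ?_
        have hcS : c ∉ S := (List.nodup_cons.mp hnd).1
        obtain ⟨h1, h2⟩ := mem_hook hp
        constructor <;> apply Pi.single_eq_of_ne <;> grind
      rw [swapReflS_of_isLeft_eq hc, hsingle, hfix, swapReflS_of_isLeft_ne (hc ▸ ht),
        if_neg (by simp [Ne.symm hcr])]
      simp [wtS, Ne.symm hcr]
    · have hcr' : c.isLeft = r.isLeft := by grind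
      rw [swapReflS_of_isLeft_eq hcr', Function.comp_apply, Equiv.swap_apply_right,
        chainRefl_apply_of_forall_ne, swapReflS_of_isLeft_ne hc, if_neg (by simp [Ne.symm hca])]
      · simp [wtS, hca]
      · intro p hp
        have hcS : c ∉ S := (List.nodup_cons.mp hnd).1
        obtain ⟨h1, h2⟩ := mem_hook hp
        grind

lemma RPchain_eq_chainRefl (C : ℕ → Fin m ⊕ Fin n) (μ : (Fin m ⊕ Fin n) → ℝ) :
    RPchain m n C μ = chainRefl m n ((bubblePat 0 (m + n - 1) true).map (Prod.map C C)) μ := by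
  rw [chainRefl, List.foldl_map]
  rfl

lemma RPchainEven_eq_chainReflEven (C : ℕ → Fin m ⊕ Fin n) (μ : (Fin m ⊕ Fin n) → ℝ) :
    RPchainEven m n C μ =
      chainReflEven m n ((bubblePat 0 (m + n - 1) true).map (Prod.map C C)) μ := by
  rw [chainReflEven, List.foldl_map]
  rfl

variable {C : ℕ → Fin m ⊕ Fin n}

lemma forall_mem_map_range'_ne {l r : ℕ} (hC : Set.InjOn C (Set.Icc l r)) :
    ∀ c ∈ (List.range' (l + 1) (r - 1 - l)).map C, c ≠ C l ∧ c ≠ C r := by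
  intro c hc
  obtain ⟨i, hi, rfl⟩ := List.mem_map.mp hc
  rw [List.mem_range'_1] at hi
  have hil : l ≤ i ∧ i ≤ r := by omega
  refine ⟨fun h => ?_, fun h => ?_⟩
  · have := hC hil ⟨le_rfl, by omega⟩ h
    omega
  · have := hC hil ⟨by omega, le_rfl⟩ h
    omega

lemma chainRefl_bubblePat_eq_chainReflEven {l r : ℕ} (hC : Set.InjOn C (Set.Icc l r))
    (hpal : ∀ i ∈ Set.Icc l r, (C i).isLeft = (C (l + r - i)).isLeft) (μ : (Fin m ⊕ Fin n) → ℝ) :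
    chainRefl m n ((bubblePat l r true).map (Prod.map C C)) μ =
      chainReflEven m n ((bubblePat l r true).map (Prod.map C C)) μ := by
  by_cases h : l < r
  · have hends : (C l).isLeft = (C r).isLeft := by
      simpa using hpal l ⟨le_rfl, h.le⟩
    have hS := forall_mem_map_range'_ne hC
    rw [bubblePat_true_of_lt h, List.map_append, hook_map, chainRefl_append, chainReflEven_append,
      chainRefl_hook hends hS, chainReflEven_hook hends hS]
    refine chainRefl_bubblePat_eq_chainReflEven (l := l + 1) (r := r - 1)
      (hC.mono (Set.Icc_subset_Icc (by omega) (by omega))) (fun i ⟨hli, hir⟩ => ?_) _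
    rw [show l + 1 + (r - 1) - i = l + r - i by omega]
    exact hpal i ⟨by omega, by omega⟩
  · rw [bubblePat, dif_neg h]
    rfl
termination_by r - l

lemma chainRefl_bubblePat_single_apply {l r : ℕ} (hC : Set.InjOn C (Set.Icc l r)) (h : l < r)
    (hends : (C l).isLeft ≠ (C r).isLeft) :
    chainRefl m n ((bubblePat l r true).map (Prod.map C C)) (Pi.single (C l) 2) (C r) = 1 := by
  have hinner : ∀ p ∈ (bubblePat (l + 1) (r - 1) true).map (Prod.map C C),
      C r ≠ p.1 ∧ C r ≠ p.2 := by
    intro p hp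
    obtain ⟨q, hq, rfl⟩ := List.mem_map.mp hp
    obtain ⟨⟨hq1, hq1'⟩, ⟨hq2, hq2'⟩⟩ := mem_bubblePat hq
    constructor <;> intro h <;> have := hC ⟨by omega, le_rfl⟩ ⟨by omega, by omega⟩ h <;> omega
  have hnd : ((List.range' (l + 1) (r - 1 - l)).map C).Nodup :=
    (List.nodup_range').map_on fun x hx y hy hxy => by
      rw [List.mem_range'_1] at hx hy
      exact hC ⟨by omega, by omega⟩ ⟨by omega, by omega⟩ hxy
  rw [bubblePat_true_of_lt h, List.map_append, hook_map, chainRefl_append,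
    chainRefl_apply_of_forall_ne hinner,
    chainRefl_hook_single_apply hends (forall_mem_map_range'_ne hC) hnd]

lemma exists_chainRefl_bubblePat_ne {l r : ℕ} (hC : Set.InjOn C (Set.Icc l r)) {i : ℕ}
    (hi : i ∈ Set.Icc l r) (hne : (C i).isLeft ≠ (C (l + r - i)).isLeft) :
    ∃ μ : (Fin m ⊕ Fin n) → ℝ, chainRefl m n ((bubblePat l r true).map (Prod.map C C)) μ ≠
      chainReflEven m n ((bubblePat l r true).map (Prod.map C C)) μ := by
  obtain ⟨hli, hir⟩ := hi
  have h : l < r := by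
    by_contra h
    exact hne (by rw [show l + r - i = i by omega])
  by_cases hends : (C l).isLeft = (C r).isLeft
  · have hil : i ≠ l := by rintro rfl; exact hne (by simpa using hends)
    have hir' : i ≠ r := by rintro rfl; exact hne (by simpa using hends.symm)
    obtain ⟨μ, hμ⟩ := exists_chainRefl_bubblePat_ne (l := l + 1) (r := r - 1) (i := i)
      (hC.mono (Set.Icc_subset_Icc (by omega) (by omega))) ⟨by omega, by omega⟩
      (by rwa [show l + 1 + (r - 1) - i = l + r - i by omega])
    have hS := forall_mem_map_range'_ne hC
    refine ⟨μ ∘ Equiv.swap (C l) (C r), ?_⟩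
    rw [bubblePat_true_of_lt h, List.map_append, hook_map, chainRefl_append, chainReflEven_append,
      chainRefl_hook hends hS, chainReflEven_hook hends hS]
    convert hμ using 2 <;> funext x <;> simp [Equiv.swap_apply_self]
  · refine ⟨Pi.single (C l) 2, fun heq => ?_⟩
    have hone := chainRefl_bubblePat_single_apply hC h hends
    obtain ⟨σ, hσ⟩ := exists_chainReflEven_eq_comp _ (Pi.single (C l) (2 : ℝ))
    rw [heq, hσ, Function.comp_apply, Pi.single_apply] at hone
    split_ifs at hone <;> norm_num at hone
termination_by r - l

end RPchain

/-- `R_P = R_P'` as operators on `h*` if and only if the type-string of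
the δε-chain `P` is a palindrome. -/
theorem stmt9 (m n : ℕ) (C : ℕ → Fin m ⊕ Fin n)
    (hC : Set.BijOn C (Set.Iio (m + n)) Set.univ) :
    (∀ μ : (Fin m ⊕ Fin n) → ℝ, RPchain m n C μ = RPchainEven m n C μ) ↔
      (∀ i < m + n, (C i).isLeft = (C (m + n - 1 - i)).isLeft) := by
  -- `C 0` inhabits `Fin m ⊕ Fin n`, so `m + n - 1` does not truncate.
  have hpos : 0 < m + n := by
    rcases C 0 with i | j
    · exact Nat.add_pos_left i.pos n
    · exact Nat.add_pos_right m j.pos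
  have hinj : Set.InjOn C (Set.Icc 0 (m + n - 1)) :=
    hC.injOn.mono fun i hi => Set.mem_Iio.mpr (by have := hi.2; omega)
  simp only [RPchain.RPchain_eq_chainRefl, RPchain.RPchainEven_eq_chainReflEven]
  constructor
  · intro h i hi
    by_contra hne
    obtain ⟨μ, hμ⟩ := RPchain.exists_chainRefl_bubblePat_ne hinj (i := i) ⟨by omega, by omega⟩
      (by rwa [zero_add])
    exact hμ (h μ)
  · intro h μ
    exact RPchain.chainRefl_bubblePat_eq_chainReflEven hinj
      (fun i hi => by rw [zero_add]; exact h i (by have := hi.2; omega)) μ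
end
end

section
/- In the setting of δε-chains with odd and even reflections acting on weights: the composition of the two odd reflections r_{ε−δ} ∘ r_{δ−ε} is the identity on weights, and more generally r_{ε−δ₁} ∘ r_{δ₁−δ₂} ∘ ⋯ ∘ r_{δ_{k−1}−δ_k} ∘ r_{δ_k−ε} = r_{δ₁−δ₂} ∘ ⋯ ∘ r_{δ_{k−1}−δ_k}, i.e. a matched pair of odd reflections separated only by even reflections cancels. -/
/-!
Every even reflection, hence the chain `w = r_{δ₁−δ₂} ∘ ⋯ ∘ r_{δ_{k−1}−δ_k}`, is additive and
preserves the form, so it intertwines odd reflections: `w ∘ r_α = r_{w α} ∘ w`. As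
`w (δ_k − ε) = δ₁ − ε`, everything reduces to `r_{−β} ∘ r_β = id` for isotropic `β`, which holds
because `⟨β, λ − β⟩ = ⟨β, λ⟩`.
-/

noncomputable section

/-- The composition `r_{δ₁−δ₂} ∘ ⋯ ∘ r_{δ_{k−1}−δ_k}` of even reflections along the
chain `d 0, d 1, …, d (k−1)` of `δ`-indices. -/
def evenChainS (m n k : ℕ) (d : ℕ → Fin m) : ((Fin m ⊕ Fin n) → ℝ) → (Fin m ⊕ Fin n) → ℝ :=
  (List.range (k - 1)).foldr
    (fun i f => fun μ =>
      evenReflS m n (wtS m n (Sum.inl (d i)) - wtS m n (Sum.inl (d (i + 1)))) (f μ))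
    id

namespace OddReflection

variable {m n : ℕ}

local notation "V" => (Fin m ⊕ Fin n) → ℝ

lemma wformS_comm (v w : V) : wformS m n v w = wformS m n w v := by
  simp only [wformS, mul_comm]

lemma wformS_sub_left (u v w : V) :
    wformS m n (u - v) w = wformS m n u w - wformS m n v w := by
  simp only [wformS, Pi.sub_apply, sub_mul, Finset.sum_sub_distrib]
  ring

lemma wformS_sub_right (u v w : V) :
    wformS m n u (v - w) = wformS m n u v - wformS m n u w := by
  rw [wformS_comm, wformS_sub_left, wformS_comm v, wformS_comm w]

lemma wformS_smul_left (c : ℝ) (v w : V) : wformS m n (c • v) w = c * wformS m n v w := by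
  simp only [wformS, Pi.smul_apply, smul_eq_mul, mul_assoc, ← Finset.mul_sum]
  ring

lemma wformS_smul_right (c : ℝ) (v w : V) : wformS m n v (c • w) = c * wformS m n v w := by
  rw [wformS_comm, wformS_smul_left, wformS_comm]

lemma wformS_neg_left (v w : V) : wformS m n (-v) w = -wformS m n v w := by
  simpa using wformS_smul_left (-1) v w

lemma wformS_wtS_inl (i : Fin m) (μ : V) : wformS m n (wtS m n (.inl i)) μ = μ (.inl i) := by
  simp [wformS, wtS, Pi.single_apply]

lemma wformS_wtS_inr (j : Fin n) (μ : V) : wformS m n (wtS m n (.inr j)) μ = -μ (.inr j) := by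
  simp [wformS, wtS, Pi.single_apply]

lemma wformS_delta_sub_eps_self (i : Fin m) (j : Fin n) :
    wformS m n (wtS m n (.inl i) - wtS m n (.inr j))
      (wtS m n (.inl i) - wtS m n (.inr j)) = 0 := by
  rw [wformS_sub_left, wformS_wtS_inl, wformS_wtS_inr]
  simp [wtS]

lemma oddReflS_neg_oddReflS {α : V} (hα : wformS m n α α = 0) (μ : V) :
    oddReflS m n (-α) (oddReflS m n α μ) = μ := by
  by_cases h : wformS m n α μ = 0
  · simp [oddReflS, wformS_neg_left, h]
  · have h' : wformS m n (-α) (μ - α) ≠ 0 := by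
      simpa [wformS_neg_left, wformS_sub_right, hα] using h
    simp [oddReflS, h, h']

lemma map_oddReflS {f : V → V} (hf_sub : ∀ μ ν, f (μ - ν) = f μ - f ν)
    (hf : ∀ μ ν, wformS m n (f μ) (f ν) = wformS m n μ ν) (α μ : V) :
    f (oddReflS m n α μ) = oddReflS m n (f α) (f μ) := by
  by_cases h : wformS m n α μ = 0 <;> simp [oddReflS, hf, hf_sub, h]

lemma evenReflS_of_wformS_eq_zero {α μ : V} (h : wformS m n α μ = 0) :
    evenReflS m n α μ = μ := by
  simp [evenReflS, h]

lemma evenReflS_sub (α μ ν : V) :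
    evenReflS m n α (μ - ν) = evenReflS m n α μ - evenReflS m n α ν := by
  simp only [evenReflS, wformS_sub_right, mul_sub, sub_div, sub_smul]
  abel

-- For isotropic `α` the reflection is the identity, as division by zero gives zero.
lemma wformS_evenReflS (α μ ν : V) :
    wformS m n (evenReflS m n α μ) (evenReflS m n α ν) = wformS m n μ ν := by
  by_cases hα : wformS m n α α = 0
  · simp [evenReflS, hα]
  · simp only [evenReflS, wformS_sub_left, wformS_sub_right, wformS_smul_left,
      wformS_smul_right, wformS_comm μ α]
    field_simp
    ring

lemma evenReflS_delta_sub_delta (a b : Fin m) :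
    evenReflS m n (wtS m n (.inl a) - wtS m n (.inl b)) (wtS m n (.inl b)) = wtS m n (.inl a) := by
  rcases eq_or_ne a b with rfl | hab
  · simp [evenReflS]
  · have hb : wformS m n (wtS m n (.inl a) - wtS m n (.inl b)) (wtS m n (.inl b)) = -1 := by
      rw [wformS_sub_left, wformS_wtS_inl, wformS_wtS_inl]
      simp [wtS, hab]
    have hα : wformS m n (wtS m n (.inl a) - wtS m n (.inl b))
        (wtS m n (.inl a) - wtS m n (.inl b)) = 2 := by
      rw [wformS_sub_left, wformS_wtS_inl, wformS_wtS_inl]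
      simp [wtS, hab, hab.symm]
      norm_num
    rw [evenReflS, hb, hα]
    norm_num

lemma evenReflS_wtS_inr (a b : Fin m) (j : Fin n) :
    evenReflS m n (wtS m n (.inl a) - wtS m n (.inl b)) (wtS m n (.inr j)) = wtS m n (.inr j) :=
  evenReflS_of_wformS_eq_zero (by rw [wformS_sub_left, wformS_wtS_inl, wformS_wtS_inl]; simp [wtS])

lemma evenChainS_induction (P : (V → V) → Prop) (hid : P id)
    (hcomp : ∀ a b f, P f → P (evenReflS m n (wtS m n (.inl a) - wtS m n (.inl b)) ∘ f))
    (k : ℕ) (d : ℕ → Fin m) : P (evenChainS m n k d) := by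
  unfold evenChainS
  induction List.range (k - 1) with
  | nil => exact hid
  | cons i l ih => exact hcomp _ _ _ ih

lemma evenChainS_sub (k : ℕ) (d : ℕ → Fin m) (μ ν : V) :
    evenChainS m n k d (μ - ν) = evenChainS m n k d μ - evenChainS m n k d ν := by
  refine evenChainS_induction (fun f => ∀ μ ν, f (μ - ν) = f μ - f ν) (fun _ _ => rfl)
    (fun a b f hf μ ν => ?_) k d μ ν
  simp only [Function.comp_apply, hf, evenReflS_sub]

lemma wformS_evenChainS (k : ℕ) (d : ℕ → Fin m) (μ ν : V) :
    wformS m n (evenChainS m n k d μ) (evenChainS m n k d ν) = wformS m n μ ν := by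
  refine evenChainS_induction (fun f => ∀ μ ν, wformS m n (f μ) (f ν) = wformS m n μ ν)
    (fun _ _ => rfl) (fun a b f hf μ ν => ?_) k d μ ν
  simp only [Function.comp_apply, wformS_evenReflS, hf]

lemma evenChainS_wtS_inr (k : ℕ) (d : ℕ → Fin m) (j : Fin n) :
    evenChainS m n k d (wtS m n (.inr j)) = wtS m n (.inr j) := by
  refine evenChainS_induction (fun f => f (wtS m n (.inr j)) = wtS m n (.inr j)) rfl
    (fun a b f hf => ?_) k d
  simp only [Function.comp_apply, hf, evenReflS_wtS_inr]

lemma evenChainS_add_two (k : ℕ) (d : ℕ → Fin m) (μ : V) :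
    evenChainS m n (k + 2) d μ =
      evenChainS m n (k + 1) d
        (evenReflS m n (wtS m n (.inl (d k)) - wtS m n (.inl (d (k + 1)))) μ) := by
  suffices ∀ (l : List ℕ) (g : ℕ → V → V) (f : V → V) (μ : V),
      l.foldr (fun i f μ => g i (f μ)) f μ = l.foldr (fun i f μ => g i (f μ)) id (f μ) by
    show (List.range (k + 1)).foldr _ id μ = (List.range k).foldr _ id _
    rw [List.range_succ, List.foldr_append]
    exact this _ _ _ μ
  intro l g f μ
  induction l with
  | nil => rfl
  | cons i l ih => simp only [List.foldr_cons, ih]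

lemma evenChainS_wtS_inl (k : ℕ) (d : ℕ → Fin m) :
    evenChainS m n k d (wtS m n (.inl (d (k - 1)))) = wtS m n (.inl (d 0)) := by
  induction k with
  | zero => rfl
  | succ k ih =>
    cases k with
    | zero => rfl
    | succ k =>
      rw [evenChainS_add_two, Nat.add_sub_cancel, evenReflS_delta_sub_delta]
      exact ih

end OddReflection

open OddReflection in
theorem stmt10_general (m n : ℕ) (e : Fin n) (k : ℕ) (d : ℕ → Fin m) :
    (∀ (δi : Fin m) (lam : (Fin m ⊕ Fin n) → ℝ),
        oddReflS m n (wtS m n (Sum.inr e) - wtS m n (Sum.inl δi))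
          (oddReflS m n (wtS m n (Sum.inl δi) - wtS m n (Sum.inr e)) lam) = lam) ∧
    (∀ lam : (Fin m ⊕ Fin n) → ℝ,
        oddReflS m n (wtS m n (Sum.inr e) - wtS m n (Sum.inl (d 0)))
          (evenChainS m n k d
            (oddReflS m n (wtS m n (Sum.inl (d (k - 1))) - wtS m n (Sum.inr e)) lam)) =
        evenChainS m n k d lam) := by
  refine ⟨fun δi lam => ?_, fun lam => ?_⟩
  · rw [← neg_sub, oddReflS_neg_oddReflS (wformS_delta_sub_eps_self δi e)]
  · have hroot : evenChainS m n k d (wtS m n (.inl (d (k - 1))) - wtS m n (.inr e)) =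
        wtS m n (.inl (d 0)) - wtS m n (.inr e) := by
      rw [evenChainS_sub, evenChainS_wtS_inl, evenChainS_wtS_inr]
    rw [map_oddReflS (evenChainS_sub k d) (wformS_evenChainS k d), hroot, ← neg_sub,
      oddReflS_neg_oddReflS (wformS_delta_sub_eps_self (d 0) e)]

/-- `r_{ε−δ} ∘ r_{δ−ε} = id` on weights, and more generally
`r_{ε−δ₁} ∘ r_{δ₁−δ₂} ∘ ⋯ ∘ r_{δ_{k−1}−δ_k} ∘ r_{δ_k−ε} = r_{δ₁−δ₂} ∘ ⋯ ∘ r_{δ_{k−1}−δ_k}`: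
a matched pair of odd reflections separated only by even reflections cancels. -/
theorem stmt10 (m n : ℕ) (e : Fin n) (k : ℕ) (hk : 1 ≤ k) (d : ℕ → Fin m)
    (hd : Set.InjOn d (Set.Iio k)) :
    (∀ (δi : Fin m) (lam : (Fin m ⊕ Fin n) → ℝ),
        oddReflS m n (wtS m n (Sum.inr e) - wtS m n (Sum.inl δi))
          (oddReflS m n (wtS m n (Sum.inl δi) - wtS m n (Sum.inr e)) lam) = lam) ∧
    (∀ lam : (Fin m ⊕ Fin n) → ℝ,
        oddReflS m n (wtS m n (Sum.inr e) - wtS m n (Sum.inl (d 0)))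
          (evenChainS m n k d
            (oddReflS m n (wtS m n (Sum.inl (d (k - 1))) - wtS m n (Sum.inr e)) lam)) =
        evenChainS m n k d lam) :=
  stmt10_general m n e k d
end
end

section
/- Let ξ₁,…,ξ_q, η₁,…,η_q, ξ̄₁,…,ξ̄_q, η̄₁,…,η̄_q be odd generators of a Grassmann algebra, λ ∈ ℂ, and consider the Berezin integral c(λ) = ∏_{i=1}^q ∫ D(ξ_i, η_i) (1 − 2λ ξ_i η_i) where ∫ D(ξ,η) extracts the coefficient of ξη. Then c(λ) = (−2)^q λ^q. In particular, the rank-one c-function integral at an isotropic restricted root α with m_α = −2q equals (−2)^q ⟨λ, α⟩^q, a polynomial vanishing exactly at ⟨λ, α⟩ = 0. -/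
/-!
Writing `ξ_i = e_{2i}`, `η_i = e_{2i+1}`, expanding `∏_{i<q} (1 + c ξ_i η_i)` gives
`∑_{s ⊆ {0,…,q-1}} c^{|s|} ∏_{i ∈ s} ξ_i η_i`, and each summand is already an ordered monomial
in the generators `e_k`, `k < 2q`. A functional reading off the coefficient of the top monomial
kills every summand but `s = {0,…,q-1}`, so `c(λ) = c^q` with `c = -2λ`.
-/

namespace Finset

theorem sort_insert_of_forall_lt {α : Type*} [LinearOrder α] {a : α} {s : Finset α}
    (h : ∀ b ∈ s, b < a) : (insert a s).sort (· ≤ ·) = s.sort (· ≤ ·) ++ [a] := by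
  refine (sortedLT_sort _).pairwise.eq_of_mem_iff ?_ fun b => by simp [or_comm]
  refine List.pairwise_append.mpr ⟨(sortedLT_sort s).pairwise, List.pairwise_singleton _ a, ?_⟩
  simpa using h

end Finset

open Finset

section OrderedProd

variable {A : Type*} [Monoid A] (f : ℕ → A)

def orderedProd (s : Finset ℕ) : A := ((s.sort (· ≤ ·)).map f).prod

theorem orderedProd_insert_of_forall_lt {a : ℕ} {s : Finset ℕ} (h : ∀ b ∈ s, b < a) :
    orderedProd f (insert a s) = orderedProd f s * f a := by
  simp [orderedProd, sort_insert_of_forall_lt h]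

theorem orderedProd_range (n : ℕ) : orderedProd f (range n) = ((List.range n).map f).prod := by
  rw [orderedProd, sort_range]

end OrderedProd

def pairIndices (s : Finset ℕ) : Finset ℕ := s.biUnion fun i => {2 * i, 2 * i + 1}

@[simp]
theorem mem_pairIndices {s : Finset ℕ} {k : ℕ} : k ∈ pairIndices s ↔ k / 2 ∈ s := by
  simp only [pairIndices, mem_biUnion, mem_insert, mem_singleton]
  constructor
  · rintro ⟨i, hi, rfl | rfl⟩ <;> simpa [Nat.mul_add_div] using hi
  · exact fun hk => ⟨k / 2, hk, by omega⟩

theorem pairIndices_injective : Function.Injective pairIndices := fun s t h => by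
  ext i
  simpa using congrArg (2 * i ∈ ·) h

theorem pairIndices_range (n : ℕ) : pairIndices (range n) = range (2 * n) := by
  ext k
  simp only [mem_pairIndices, mem_range]
  omega

theorem pairIndices_insert (n : ℕ) (s : Finset ℕ) :
    pairIndices (insert n s) = insert (2 * n + 1) (insert (2 * n) (pairIndices s)) := by
  ext k
  have : k / 2 = n ↔ k = 2 * n + 1 ∨ k = 2 * n := by omega
  simp only [mem_pairIndices, mem_insert, this, or_assoc]


section Expansion

variable {R A : Type*} [CommSemiring R] [Semiring A] [Algebra R A] (f : ℕ → A)

theorem orderedProd_pairIndices_insert {n : ℕ} {s : Finset ℕ} (hs : s ⊆ range n) :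
    orderedProd f (pairIndices (insert n s)) =
      orderedProd f (pairIndices s) * f (2 * n) * f (2 * n + 1) := by
  have hlt : ∀ k ∈ pairIndices s, k < 2 * n := fun k hk => by
    have := mem_range.mp (hs (mem_pairIndices.mp hk)); omega
  rw [pairIndices_insert, orderedProd_insert_of_forall_lt, orderedProd_insert_of_forall_lt f hlt]
  simp only [mem_insert]
  rintro k (rfl | hk)
  · omega
  · exact (hlt k hk).trans (by omega)

theorem list_prod_one_add_smul_pair_eq_sum (c : R) (n : ℕ) :
    ((List.range n).map fun i => 1 + c • (f (2 * i) * f (2 * i + 1))).prod =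
      ∑ s ∈ (range n).powerset, c ^ s.card • orderedProd f (pairIndices s) := by
  induction n with
  | zero => simp [orderedProd, pairIndices]
  | succ n ih =>
    rw [List.range_succ, List.map_append, List.prod_append, ih, range_add_one,
      sum_powerset_insert notMem_range_self, List.map_singleton, List.prod_singleton,
      mul_add, mul_one, sum_mul]
    congr 1
    refine sum_congr rfl fun s hs => ?_
    have hs : s ⊆ range n := mem_powerset.mp hs
    have hns : n ∉ s := fun h => notMem_range_self (hs h)
    rw [card_insert_of_notMem hns, orderedProd_pairIndices_insert f hs, smul_mul_assoc,
      mul_smul_comm, smul_smul, pow_succ, mul_assoc]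

theorem linearMap_list_prod_one_add_smul_pair (B : A →ₗ[R] R) (c : R) (q : ℕ)
    (htop : B (((List.range (2 * q)).map f).prod) = 1)
    (hlow : ∀ s : Finset ℕ, ↑s ⊆ Set.Iio (2 * q) → s ≠ range (2 * q) →
      B (orderedProd f s) = 0) :
    B (((List.range q).map fun i => 1 + c • (f (2 * i) * f (2 * i + 1))).prod) = c ^ q := by
  rw [list_prod_one_add_smul_pair_eq_sum, map_sum,
    sum_eq_single_of_mem _ (mem_powerset_self _), map_smul, pairIndices_range, orderedProd_range,
    htop, card_range, smul_eq_mul, mul_one]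
  intro s hs hne
  have hsub : ↑(pairIndices s) ⊆ Set.Iio (2 * q) := fun k hk => by
    have := mem_range.mp (mem_powerset.mp hs (mem_pairIndices.mp hk))
    exact Set.mem_Iio.mpr (by omega)
  rw [map_smul, hlow _ hsub (pairIndices_range q ▸ pairIndices_injective.ne hne), smul_zero]

end Expansion

/-- the Berezin integral
`c(λ) = ∏_{i=1}^q ∫ D(ξ_i,η_i) (1 − 2λ ξ_i η_i)` equals `(−2)^q λ^q`.  The Grassmann
algebra is realised as the exterior algebra on generators `e_k = ι(single k 1)`, with
`ξ_i = e_{2i}`, `η_i = e_{2i+1}`, and the Berezin integral is any linear functional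
extracting the coefficient of the top product `e_0 ⋯ e_{2q−1}`.  In particular this
polynomial in `λ` vanishes exactly at `λ = 0` (for `q > 0`). -/
theorem stmt16 (q : ℕ) (lam : ℂ)
    (Ber : ExteriorAlgebra ℂ (ℕ → ℂ) →ₗ[ℂ] ℂ)
    (htop : Ber (((List.range (2 * q)).map fun k =>
        ExteriorAlgebra.ι ℂ (Pi.single k (1 : ℂ))).prod) = 1)
    (hlow : ∀ s : Finset ℕ, ↑s ⊆ Set.Iio (2 * q) → s ≠ Finset.range (2 * q) →
        Ber (((s.sort (· ≤ ·)).map fun k =>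
          ExteriorAlgebra.ι ℂ (Pi.single k (1 : ℂ))).prod) = 0) :
    Ber (((List.range q).map fun i =>
        (1 : ExteriorAlgebra ℂ (ℕ → ℂ)) -
          (2 * lam) • (ExteriorAlgebra.ι ℂ (Pi.single (2 * i) (1 : ℂ)) *
            ExteriorAlgebra.ι ℂ (Pi.single (2 * i + 1) (1 : ℂ)))).prod) =
      (-2 : ℂ) ^ q * lam ^ q ∧
    ((-2 : ℂ) ^ q * lam ^ q = 0 ↔ 0 < q ∧ lam = 0) := by
  refine ⟨?_, by simp [pow_eq_zero_iff', Nat.pos_iff_ne_zero, and_comm]⟩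
  simp only [sub_eq_add_neg, ← neg_smul]
  rw [linearMap_list_prod_one_add_smul_pair _ Ber _ q htop hlow, ← neg_mul, mul_pow]
end
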